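/- Let T be a t-norm and let R be a fuzzy T-equivalence on a set U with a dually well-ordered spectrum. Then the poset 𝓡𝓢(U,R) = {(μ_{[A]_R}, μ_{[A]^R}) | A ⊆ U}, ordered componentwise and pointwise, is order-isomorphic to the poset RS(U,E) = {(A_E, A^E) | A ⊆ U} of crisp rough sets for the equivalence E, ordered by componentwise inclusion, via the map sending (A_E, A^E) to (μ_{[A]_R}, μ_{[A]^R}). -/

import Mathlib

/-!
Both approximation pairs are images of `Set U`, so it suffices that `A ↦ (A_E, A^E)` and
`A ↦ (μ_[A]_R, μ_[A]^R)` induce the same preorder on `Set U`. By `T`-transitivity with unit `1`,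
`μ x y ≤ μ x z` whenever `μ y z = 1`, so the fuzzy approximations are monotone in the crisp ones.
Conversely, a dually well-ordered spectrum makes the supremum defining `μ_[A]^R x` attained, so
`μ_[A]^R x = 1` exactly when `x ∈ A^E`, and the crisp upper approximation is recovered from the
fuzzy one. The lower approximations are the `σ`-duals of the upper ones of `Aᶜ`.
-/

open unitInterval

noncomputable section

instance : Fact ((0:ℝ) ≤ 1) := ⟨zero_le_one⟩

/-- A t-norm on the unit interval: commutative, associative, monotone in each
argument, with `1` as unit. -/
def IsTnorm (T : I → I → I) : Prop :=
  (∀ x y, T x y = T y x) ∧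
  (∀ x y z, T (T x y) z = T x (T y z)) ∧
  (∀ x₁ x₂ y, x₁ ≤ x₂ → T x₁ y ≤ T x₂ y) ∧
  (∀ x y₁ y₂, y₁ ≤ y₂ → T x y₁ ≤ T x y₂) ∧
  (∀ x, T x 1 = x)

/-- A fuzzy `T`-equivalence: reflexive, symmetric, `T`-transitive fuzzy relation. -/
def IsFuzzyTEquiv {U : Type*} (T : I → I → I) (μ : U → U → I) : Prop :=
  (∀ x, μ x x = 1) ∧ (∀ x y, μ x y = μ y x) ∧ (∀ x y z, T (μ x y) (μ y z) ≤ μ x z)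

/-- Fuzzy upper approximation of a crisp set `A`: `sup {μ x y | y ∈ A}` (`sup ∅ = 0`). -/
def upperApp {U : Type*} (μ : U → U → I) (A : Set U) (x : U) : I := sSup (μ x '' A)

/-- Fuzzy lower approximation of a crisp set `A`: `inf {1 - μ x y | y ∉ A}` (`inf ∅ = 1`). -/
def lowerApp {U : Type*} (μ : U → U → I) (A : Set U) (x : U) : I :=
  sInf ((fun y => σ (μ x y)) '' Aᶜ)

/-- The spectrum of a fuzzy relation. -/
def fuzzySpectrum {U : Type*} (μ : U → U → I) : Set I := {r | ∃ x y, μ x y = r}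

/-- `R` has a dually well-ordered spectrum: every nonempty subset of the
spectrum has a greatest element. -/
def DuallyWellOrdered {U : Type*} (μ : U → U → I) : Prop :=
  ∀ s ⊆ fuzzySpectrum μ, s.Nonempty → ∃ m ∈ s, ∀ r ∈ s, r ≤ m

/-- Upper approximation by the crisp equivalence `E = {(x,y) | μ x y = 1}`. -/
def upperE {U : Type*} (μ : U → U → I) (A : Set U) : Set U :=
  {x | ({y | μ x y = 1} ∩ A).Nonempty}

/-- Lower approximation by the crisp equivalence `E = {(x,y) | μ x y = 1}`. -/
def lowerE {U : Type*} (μ : U → U → I) (A : Set U) : Set U :=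
  {x | {y | μ x y = 1} ⊆ A}

/-- Upper approximation by the support relation `S = {(x,y) | μ x y > 0}`. -/
def upperS {U : Type*} (μ : U → U → I) (A : Set U) : Set U :=
  {x | ({y | 0 < μ x y} ∩ A).Nonempty}

/-- Lower approximation by the support relation `S = {(x,y) | μ x y > 0}`. -/
def lowerS {U : Type*} (μ : U → U → I) (A : Set U) : Set U :=
  {x | {y | 0 < μ x y} ⊆ A}

theorem exists_orderIso_image_of_le_iff_le {α β γ : Type*} [PartialOrder β] [PartialOrder γ]
    (f : α → β) (g : α → γ) (h : ∀ a b, f a ≤ f b ↔ g a ≤ g b) :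
    ∃ e : {p : β // ∃ a, p = f a} ≃o {q : γ // ∃ a, q = g a},
      ∀ a, (e ⟨f a, a, rfl⟩ : {q : γ // ∃ a, q = g a}).1 = g a := by
  have g_eq_of_f_eq : ∀ a b, f a = f b → g a = g b := fun a b hab =>
    le_antisymm ((h a b).1 hab.le) ((h b a).1 hab.ge)
  let F : {p : β // ∃ a, p = f a} ↪o {q : γ // ∃ a, q = g a} :=
    OrderEmbedding.ofMapLEIff (fun p => ⟨g p.2.choose, _, rfl⟩) fun p p' => by
      change g _ ≤ g _ ↔ p.1 ≤ p'.1
      rw [← h, ← p.2.choose_spec, ← p'.2.choose_spec]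
  have hF : ∀ a, (F ⟨f a, a, rfl⟩).1 = g a := fun a =>
    g_eq_of_f_eq _ _ (⟨f a, a, rfl⟩ : {p : β // ∃ a, p = f a}).2.choose_spec.symm
  refine ⟨OrderIso.ofSurjective F ?_, hF⟩
  rintro ⟨_, a, rfl⟩
  exact ⟨⟨f a, a, rfl⟩, Subtype.ext (hF a)⟩

theorem unitInterval.sInf_image_symm (S : Set I) : sInf (σ '' S) = σ (sSup S) := by
  refine le_antisymm ?_ ?_
  · rw [le_symm_comm]
    exact sSup_le fun s hs => le_symm_comm.1 (sInf_le ⟨s, hs, rfl⟩)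
  · exact le_sInf <| by
      rintro _ ⟨s, hs, rfl⟩
      exact symm_le_symm.2 (le_sSup hs)

section FuzzyRoughSet

variable {U : Type*} {T : I → I → I} {μ : U → U → I}

theorem lowerApp_eq_symm_upperApp_compl (A : Set U) (x : U) :
    lowerApp μ A x = σ (upperApp μ Aᶜ x) := by
  rw [lowerApp, upperApp, ← unitInterval.sInf_image_symm, Set.image_image]

theorem lowerE_eq_compl_upperE_compl (A : Set U) : lowerE μ A = (upperE μ Aᶜ)ᶜ := by
  ext x
  simp [lowerE, upperE, Set.subset_def, Set.Nonempty]

theorem DuallyWellOrdered.sSup_image_mem (hD : DuallyWellOrdered μ) (x : U) {A : Set U}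
    (hA : A.Nonempty) : sSup (μ x '' A) ∈ μ x '' A := by
  obtain ⟨m, hm, hmax⟩ := hD (μ x '' A) (by rintro _ ⟨y, -, rfl⟩; exact ⟨x, y, rfl⟩)
    (hA.image _)
  rwa [IsGreatest.csSup_eq ⟨hm, hmax⟩]

theorem DuallyWellOrdered.upperApp_eq_one_iff (hD : DuallyWellOrdered μ) {A : Set U} {x : U} :
    upperApp μ A x = 1 ↔ x ∈ upperE μ A := by
  constructor
  · intro hx
    obtain ⟨y, hyA, hy⟩ : sSup (μ x '' A) ∈ μ x '' A := by
      refine hD.sSup_image_mem x (Set.nonempty_iff_ne_empty.2 ?_)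
      rintro rfl
      rw [upperApp, Set.image_empty, sSup_empty] at hx
      exact zero_ne_one hx
    exact ⟨y, hy.trans hx, hyA⟩
  · rintro ⟨y, hy, hyA⟩
    exact le_antisymm le_one' (hy ▸ le_sSup ⟨y, hyA, rfl⟩)

theorem IsFuzzyTEquiv.le_of_eq_one (hT : IsTnorm T) (hR : IsFuzzyTEquiv T μ) (x : U) {y z : U}
    (h : μ y z = 1) : μ x y ≤ μ x z := by
  simpa only [h, hT.2.2.2.2] using hR.2.2 x y z

theorem IsFuzzyTEquiv.upperApp_mono (hT : IsTnorm T) (hR : IsFuzzyTEquiv T μ) {A B : Set U}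
    (h : upperE μ A ⊆ upperE μ B) : upperApp μ A ≤ upperApp μ B := fun x =>
  sSup_le <| by
    rintro _ ⟨y, hyA, rfl⟩
    obtain ⟨z, hyz, hzB⟩ := h ⟨y, hR.1 y, hyA⟩
    exact (hR.le_of_eq_one hT x hyz).trans (le_sSup ⟨z, hzB, rfl⟩)

theorem upperApp_le_upperApp_iff (hT : IsTnorm T) (hR : IsFuzzyTEquiv T μ)
    (hD : DuallyWellOrdered μ) {A B : Set U} :
    upperApp μ A ≤ upperApp μ B ↔ upperE μ A ⊆ upperE μ B := by
  refine ⟨fun h x hx => ?_, hR.upperApp_mono hT⟩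
  rw [← hD.upperApp_eq_one_iff] at hx ⊢
  exact le_antisymm le_one' (hx ▸ h x)

theorem lowerApp_le_lowerApp_iff (hT : IsTnorm T) (hR : IsFuzzyTEquiv T μ)
    (hD : DuallyWellOrdered μ) {A B : Set U} :
    lowerApp μ A ≤ lowerApp μ B ↔ lowerE μ A ⊆ lowerE μ B := by
  calc lowerApp μ A ≤ lowerApp μ B ↔ upperApp μ Bᶜ ≤ upperApp μ Aᶜ := by
        simp only [Pi.le_def, lowerApp_eq_symm_upperApp_compl, symm_le_symm]
    _ ↔ lowerE μ A ⊆ lowerE μ B := by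
        rw [upperApp_le_upperApp_iff hT hR hD, lowerE_eq_compl_upperE_compl,
          lowerE_eq_compl_upperE_compl, Set.compl_subset_compl]

end FuzzyRoughSet

/-- the poset of fuzzy rough sets `𝓡𝓢(U,R)` is order-isomorphic
to the poset of crisp rough sets `RS(U,E)`, via `(A_E, A^E) ↦ (μ_[A]_R, μ_[A]^R)`. -/
theorem stmt10 {U : Type*} (T : I → I → I) (μ : U → U → I)
    (hT : IsTnorm T) (hR : IsFuzzyTEquiv T μ) (hD : DuallyWellOrdered μ) :
    ∃ f : {p : Set U × Set U // ∃ A : Set U, p = (lowerE μ A, upperE μ A)} ≃o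
          {q : (U → I) × (U → I) // ∃ A : Set U, q = (lowerApp μ A, upperApp μ A)},
      ∀ A : Set U,
        (f ⟨(lowerE μ A, upperE μ A), A, rfl⟩ : {q : (U → I) × (U → I) //
            ∃ A : Set U, q = (lowerApp μ A, upperApp μ A)}).1 =
          (lowerApp μ A, upperApp μ A) :=
  exists_orderIso_image_of_le_iff_le _ _ fun A B => by
    simp only [Prod.mk_le_mk, lowerApp_le_lowerApp_iff hT hR hD,
      upperApp_le_upperApp_iff hT hR hD]
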